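/- arXiv:1706.02132 — 4 statements merged into one kernel-verified Lean document; each statement's English description precedes it below -/
import Mathlib

section
/- Let (x*, λ*) be an eigenpair of a symmetric tensor T of order m, and let A(x*) = H(x*) − m λ* x* (x*)^T where H(x*) = (m−1)T(I,I,x*,...,x*) − λ* I. Then A(x*) is symmetric with x* an eigenvector of eigenvalue −2λ*, and its remaining n−1 eigenvalues coincide with those of the projected Hessian H_p(x*) = U^T H(x*) U, where the columns of U span the orthogonal complement of x*. -/
open scoped RealInnerProductSpace
open Finset Matrix

noncomputable section

/-- Euclidean space `ℝ^n`. -/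
abbrev Evec (n : ℕ) := EuclideanSpace ℝ (Fin n)

/-- Interpret a plain function as a vector in `ℝ^n` (with the Euclidean norm). -/
def toE {n : ℕ} (v : Fin n → ℝ) : Evec n := (WithLp.equiv 2 (Fin n → ℝ)).symm v

/-- An order-`m` tensor on `ℝ^n`, viewed as an `m`-multilinear form. -/
abbrev SymTensor (n m : ℕ) := MultilinearMap ℝ (fun _ : Fin m => Evec n) ℝ

/-- The tensor is symmetric: invariant under permutations of its `m` slots. -/
def IsSymT {n m : ℕ} (T : SymTensor n m) : Prop :=
  ∀ (σ : Equiv.Perm (Fin m)) (v : Fin m → Evec n), (T fun i => v (σ i)) = T v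

/-- `μ(x) = T(x,…,x)`. -/
def tmu {n m : ℕ} (T : SymTensor n m) (x : Evec n) : ℝ := T fun _ => x

/-- `T(I,x,…,x)`: the vector whose `i`-th entry is `T(eᵢ,x,…,x)`. -/
def tvec {n m : ℕ} (T : SymTensor n m) (x : Evec n) : Evec n :=
  toE fun i => T fun k => if (k : ℕ) = 0 then EuclideanSpace.single i 1 else x

/-- `T(I,I,x,…,x)`: the matrix whose `(i,j)` entry is `T(eᵢ,eⱼ,x,…,x)`. -/
def tmat {n m : ℕ} (T : SymTensor n m) (x : Evec n) : Matrix (Fin n) (Fin n) ℝ :=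
  Matrix.of fun i j => T fun k =>
    if (k : ℕ) = 0 then EuclideanSpace.single i 1
    else if (k : ℕ) = 1 then EuclideanSpace.single j 1 else x

/-- The gradient `g(x) = T(I,x,…,x) − μ(x) x`. -/
def gvec {n m : ℕ} (T : SymTensor n m) (x : Evec n) : Evec n := tvec T x - tmu T x • x

/-- The Hessian `H = (m−1) T(I,I,x,…,x) − λ I` (with the eigenvalue `λ` given). -/
def HmatL {n m : ℕ} (T : SymTensor n m) (x : Evec n) (lam : ℝ) :
    Matrix (Fin n) (Fin n) ℝ :=
  ((m : ℝ) - 1) • tmat T x - lam • (1 : Matrix (Fin n) (Fin n) ℝ)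

/-- `(x,λ)` is a (real, unit-norm) eigenpair of `T`: `T(I,x,…,x) = λ x`, `‖x‖ = 1`. -/
def IsEigenpair {n m : ℕ} (T : SymTensor n m) (x : Evec n) (lam : ℝ) : Prop :=
  tvec T x = lam • x ∧ ‖x‖ = 1

/-!
At an eigenpair, `T(I,I,x,…,x) x = T(I,x,…,x) = λ x`, so `H x = (m − 2) λ x`. With
`P = x xᵀ` this gives `H P = P H = (m − 2) λ P`, hence `(I − P) H (I − P) = H − (m − 2) λ P`,
and `U Uᵀ = I − P` turns this into `U (Uᵀ H U) Uᵀ − 2 λ P = H − m λ P`.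
-/

namespace Matrix

variable {ι R : Type*} [Fintype ι] [CommRing R] {x : ι → R} {H : Matrix ι ι R}
  {c : R}

theorem vecMulVec_self_mul_self (hx : x ⬝ᵥ x = 1) :
    vecMulVec x x * vecMulVec x x = vecMulVec x x := by
  rw [vecMulVec_mul_vecMulVec, hx, one_smul]

theorem vecMulVec_self_mulVec_self (hx : x ⬝ᵥ x = 1) : vecMulVec x x *ᵥ x = x := by
  rw [vecMulVec_mulVec, hx, MulOpposite.op_one, one_smul]

theorem mul_vecMulVec_self_of_mulVec_eq (hHx : H *ᵥ x = c • x) :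
    H * vecMulVec x x = c • vecMulVec x x := by
  rw [mul_vecMulVec, hHx, smul_vecMulVec]

theorem IsSymm.vecMulVec_self_mul_of_mulVec_eq (hH : H.IsSymm) (hHx : H *ᵥ x = c • x) :
    vecMulVec x x * H = c • vecMulVec x x := by
  rw [vecMulVec_mul, ← mulVec_transpose, hH.eq, hHx, vecMulVec_smul]

theorem IsSymm.one_sub_vecMulVec_mul_mul_one_sub_vecMulVec [DecidableEq ι] (hH : H.IsSymm) (hx : x ⬝ᵥ x = 1)
    (hHx : H *ᵥ x = c • x) :
    (1 - vecMulVec x x) * H * (1 - vecMulVec x x) = H - c • vecMulVec x x := by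
  simp only [mul_sub, sub_mul, mul_one, one_mul, smul_mul,
    mul_vecMulVec_self_of_mulVec_eq hHx, hH.vecMulVec_self_mul_of_mulVec_eq hHx,
    vecMulVec_self_mul_self hx]
  module

end Matrix

theorem EuclideanSpace.dotProduct_self_eq_one {ι : Type*} [Fintype ι] {x : EuclideanSpace ℝ ι}
    (hx : ‖x‖ = 1) : x.ofLp ⬝ᵥ x.ofLp = 1 := by
  have h := real_inner_self_eq_norm_sq x
  rwa [hx, EuclideanSpace.inner_eq_star_dotProduct, star_trivial, one_pow] at h

theorem EuclideanSpace.sum_smul_single {ι : Type*} [Fintype ι] [DecidableEq ι]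
    (x : EuclideanSpace ℝ ι) : ∑ i, x i • EuclideanSpace.single i (1 : ℝ) = x := by
  simpa using (EuclideanSpace.basisFun ι ℝ).sum_repr x

section Tensor

variable {n m : ℕ}

theorem tmat_apply_eq_toLinearMap (hm : 2 ≤ m) (T : SymTensor n m) (x : Evec n) (i j : Fin n) :
    tmat T x i j = T.toLinearMap (fun k => if (k : ℕ) = 0 then EuclideanSpace.single i 1 else x)
      ⟨1, hm⟩ (EuclideanSpace.single j 1) := by
  simp only [tmat, of_apply, MultilinearMap.toLinearMap_apply]
  congr 1
  funext k
  rcases eq_or_ne k ⟨1, hm⟩ with rfl | hk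
  · simp
  · simp [Function.update_of_ne hk, Fin.ext_iff.not.mp hk]

theorem tvec_apply_eq_toLinearMap (hm : 2 ≤ m) (T : SymTensor n m) (x : Evec n) (i : Fin n) :
    tvec T x i = T.toLinearMap (fun k => if (k : ℕ) = 0 then EuclideanSpace.single i 1 else x)
      ⟨1, hm⟩ x := by
  rw [MultilinearMap.toLinearMap_apply, Function.update_eq_self_iff.mpr (by simp)]
  rfl

theorem tmat_mulVec (hm : 2 ≤ m) (T : SymTensor n m) (x : Evec n) :
    tmat T x *ᵥ x.ofLp = (tvec T x).ofLp := by
  ext i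
  set L := T.toLinearMap (fun k => if (k : ℕ) = 0 then EuclideanSpace.single i 1 else x) ⟨1, hm⟩
  calc (tmat T x *ᵥ x.ofLp) i = ∑ j, L (x j • EuclideanSpace.single j 1) := by
        simp only [mulVec, dotProduct, tmat_apply_eq_toLinearMap hm, map_smul, smul_eq_mul,
          mul_comm, L]
    _ = L x := by rw [← map_sum, EuclideanSpace.sum_smul_single]
    _ = tvec T x i := (tvec_apply_eq_toLinearMap hm T x i).symm

theorem tmat_isSymm (hm : 2 ≤ m) {T : SymTensor n m} (hT : IsSymT T) (x : Evec n) :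
    (tmat T x).IsSymm := by
  refine IsSymm.ext fun i j => ?_
  simp only [tmat, of_apply]
  rw [← hT (Equiv.swap ⟨0, by omega⟩ ⟨1, hm⟩)]
  congr 1
  funext k
  rcases eq_or_ne k ⟨0, by omega⟩ with rfl | hk0
  · simp
  rcases eq_or_ne k ⟨1, hm⟩ with rfl | hk1
  · simp
  · rw [Equiv.swap_apply_of_ne_of_ne hk0 hk1]
    simp [Fin.ext_iff.not.mp hk0, Fin.ext_iff.not.mp hk1]

theorem HmatL_isSymm (hm : 2 ≤ m) {T : SymTensor n m} (hT : IsSymT T) (x : Evec n) (lam : ℝ) :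
    (HmatL T x lam).IsSymm :=
  ((tmat_isSymm hm hT x).smul _).sub (isSymm_one.smul _)

theorem IsEigenpair.HmatL_mulVec (hm : 2 ≤ m) {T : SymTensor n m} {x : Evec n} {lam : ℝ}
    (h : IsEigenpair T x lam) : HmatL T x lam *ᵥ x.ofLp = (((m : ℝ) - 2) * lam) • x.ofLp := by
  rw [HmatL, sub_mulVec, smul_mulVec, smul_mulVec, one_mulVec, tmat_mulVec hm, h.1,
    WithLp.ofLp_smul]
  module

end Tensor

/-- The claim about the remaining `n − 1` eigenvalues is encoded as the decomposition
`A = U (Uᵀ H U) Uᵀ − 2λ* x*(x*)ᵀ`. -/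
theorem stmt_5_general {n m : ℕ} (hm : 2 ≤ m) (T : SymTensor n m) (hT : IsSymT T)
    (x : Evec n) (lam : ℝ) (h : IsEigenpair T x lam)
    (U : Matrix (Fin n) (Fin (n - 1)) ℝ)
    (hUx : U * Uᵀ = 1 - Matrix.vecMulVec (fun i => x i) (fun i => x i)) :
    (HmatL T x lam
        - ((m : ℝ) * lam) • Matrix.vecMulVec (fun i => x i) (fun i => x i)).IsSymm ∧
    (HmatL T x lam
        - ((m : ℝ) * lam) • Matrix.vecMulVec (fun i => x i) (fun i => x i)).mulVec
        (fun i => x i) = (-(2 * lam)) • (fun i => x i) ∧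
    HmatL T x lam - ((m : ℝ) * lam) • Matrix.vecMulVec (fun i => x i) (fun i => x i)
      = U * (Uᵀ * HmatL T x lam * U) * Uᵀ
        - (2 * lam) • Matrix.vecMulVec (fun i => x i) (fun i => x i) := by
  have hx := EuclideanSpace.dotProduct_self_eq_one h.2
  have hH := HmatL_isSymm hm hT x lam
  have hHx := h.HmatL_mulVec hm
  refine ⟨hH.sub (IsSymm.smul (transpose_vecMulVec _ _) _), ?_, ?_⟩
  · rw [sub_mulVec, smul_mulVec, hHx, vecMulVec_self_mulVec_self hx]
    module
  · rw [show U * (Uᵀ * HmatL T x lam * U) * Uᵀ = U * Uᵀ * HmatL T x lam * (U * Uᵀ) by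
      simp only [Matrix.mul_assoc], hUx, hH.one_sub_vecMulVec_mul_mul_one_sub_vecMulVec hx hHx]
    module

/-- at an eigenpair `(x*, λ*)`, the matrix
`A(x*) = H(x*) − m λ* x* (x*)ᵀ` is symmetric, has `x*` as an eigenvector with
eigenvalue `−2λ*`, and its remaining `n−1` eigenvalues coincide with those of the
projected Hessian `H_p(x*) = Uᵀ H(x*) U` — expressed by the spectral decomposition
`A = U (Uᵀ H U) Uᵀ − 2λ* x*(x*)ᵀ`. -/
theorem stmt_5 {n m : ℕ} (hm : 2 ≤ m) (T : SymTensor n m) (hT : IsSymT T)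
    (x : Evec n) (lam : ℝ) (h : IsEigenpair T x lam)
    (U : Matrix (Fin n) (Fin (n - 1)) ℝ) (hU : Uᵀ * U = 1)
    (hUx : U * Uᵀ = 1 - Matrix.vecMulVec (fun i => x i) (fun i => x i)) :
    (HmatL T x lam
        - ((m : ℝ) * lam) • Matrix.vecMulVec (fun i => x i) (fun i => x i)).IsSymm ∧
    (HmatL T x lam
        - ((m : ℝ) * lam) • Matrix.vecMulVec (fun i => x i) (fun i => x i)).mulVec
        (fun i => x i) = (-(2 * lam)) • (fun i => x i) ∧
    HmatL T x lam - ((m : ℝ) * lam) • Matrix.vecMulVec (fun i => x i) (fun i => x i)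
      = U * (Uᵀ * HmatL T x lam * U) * Uᵀ
        - (2 * lam) • Matrix.vecMulVec (fun i => x i) (fun i => x i) :=
  stmt_5_general hm T hT x lam h U hUx
end
end

section
/- Let (x*, λ*) be an eigenpair of a symmetric tensor T. If all eigenvalues of the projected Hessian H_p(x*) have absolute value at least γ > 0 and λ* ≠ 0, then the matrix A(x*) = H(x*) − m λ* x*(x*)^T is invertible and its smallest singular value satisfies σ_min(A(x*)) ≥ min{γ, 2|λ*|}. -/
open scoped RealInnerProductSpace
open Finset Matrix

noncomputable section

/-!
Because `T` is symmetric, `H = H(x*)` is a symmetric matrix, and the eigenpair equation gives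
`H x* = (m - 2) λ* x*`; hence `H` preserves `x*ᗮ`. Writing `v = c x* + w` with `w ⊥ x*`, we get
`A(x*) v = -2 λ* c x* + H w`, an orthogonal sum, so `‖A v‖² = 4 λ*² c² + ‖H w‖²`.
Since `U Uᵀ` is the orthogonal projection onto `x*ᗮ`, `Uᵀ` maps `x*ᗮ` isometrically and
`H_p (Uᵀ w) = Uᵀ (H w)`; the spectral theorem for the symmetric matrix `H_p` then gives
`‖H w‖ ≥ γ ‖w‖`.
-/

open WithLp

open Module.End in
theorem LinearMap.IsSymmetric.mul_norm_le_norm_apply {𝕜 E : Type*} [RCLike 𝕜]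
    [NormedAddCommGroup E] [InnerProductSpace 𝕜 E] [FiniteDimensional 𝕜 E] {T : E →ₗ[𝕜] E}
    (hT : T.IsSymmetric) {γ : ℝ} (hγ : 0 ≤ γ) (hev : ∀ μ : ℝ, HasEigenvalue T μ → γ ≤ |μ|)
    (v : E) : γ * ‖v‖ ≤ ‖T v‖ := by
  set b := hT.eigenvectorBasis rfl
  have hsq : (γ * ‖v‖) ^ 2 ≤ ‖T v‖ ^ 2 := by
    rw [mul_pow, ← b.repr.norm_map, ← b.repr.norm_map, EuclideanSpace.norm_sq_eq,
      EuclideanSpace.norm_sq_eq, Finset.mul_sum]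
    gcongr with i
    rw [hT.eigenvectorBasis_apply_self_apply, norm_mul, mul_pow, RCLike.norm_ofReal]
    gcongr
    exact hev _ (hT.hasEigenvalue_eigenvalues rfl i)
  exact (pow_le_pow_iff_left₀ (by positivity) (norm_nonneg _) two_ne_zero).1 hsq

theorem LinearMap.IsSymmetric.mul_norm_le_norm_sub_smul_inner_smul {E : Type*}
    [NormedAddCommGroup E] [InnerProductSpace ℝ E] {H : E →ₗ[ℝ] E} (hH : H.IsSymmetric)
    {x : E} (hx : ‖x‖ = 1) {α γ : ℝ} (hHx : H x = α • x)
    (hperp : ∀ w, ⟪x, w⟫ = 0 → γ * ‖w‖ ≤ ‖H w‖) (β : ℝ) (v : E) :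
    min γ |α - β| * ‖v‖ ≤ ‖H v - (β * ⟪x, v⟫) • x‖ := by
  set K := min γ |α - β|
  rcases lt_or_ge K 0 with hK | hK
  · exact (mul_nonpos_of_nonpos_of_nonneg hK.le (norm_nonneg v)).trans (norm_nonneg _)
  set c := ⟪x, v⟫
  set w := v - c • x
  have hxw : ⟪x, w⟫ = 0 := by
    simp [w, c, inner_sub_right, inner_smul_right, hx]
  have hHw : ⟪x, H w⟫ = 0 := by rw [← hH, hHx, real_inner_smul_left, hxw, mul_zero]
  have hv : ‖v‖ ^ 2 = c ^ 2 + ‖w‖ ^ 2 := by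
    rw [show v = c • x + w by simp [w], norm_add_sq_real, real_inner_smul_left, hxw,
      norm_smul, hx, Real.norm_eq_abs, mul_one, sq_abs, mul_zero, mul_zero, add_zero]
  have hAv : ‖H v - (β * c) • x‖ ^ 2 = ((α - β) * c) ^ 2 + ‖H w‖ ^ 2 := by
    rw [show H v - (β * c) • x = ((α - β) * c) • x + H w by
        simp only [w, map_sub, map_smul, hHx]; module,
      norm_add_sq_real, real_inner_smul_left, hHw, norm_smul, hx, Real.norm_eq_abs, mul_one,
      sq_abs, mul_zero, mul_zero, add_zero]
  have hw : K * ‖w‖ ≤ ‖H w‖ :=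
    (mul_le_mul_of_nonneg_right (min_le_left _ _) (norm_nonneg w)).trans (hperp w hxw)
  have hc : K * |c| ≤ |(α - β) * c| := by
    rw [abs_mul]; exact mul_le_mul_of_nonneg_right (min_le_right _ _) (abs_nonneg c)
  refine (pow_le_pow_iff_left₀ (by positivity) (norm_nonneg _) two_ne_zero).1 ?_
  rw [hAv, mul_pow, hv, mul_add, ← sq_abs c, ← mul_pow, ← mul_pow, ← sq_abs ((α - β) * c)]
  gcongr

namespace Matrix

variable {ι κ : Type*} [Fintype ι] [DecidableEq ι] [Fintype κ] [DecidableEq κ]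

theorem isUnit_of_mul_norm_le_norm_toEuclideanLin {𝕜 : Type*} [RCLike 𝕜] {A : Matrix ι ι 𝕜}
    {K : ℝ} (hK : 0 < K) (hA : ∀ v, K * ‖v‖ ≤ ‖toEuclideanLin A v‖) : IsUnit A := by
  rw [← mulVec_injective_iff_isUnit]
  intro a b hab
  have h := hA (toLp 2 (a - b))
  rw [toLpLin_toLp, toLin'_apply, mulVec_sub, hab, sub_self, WithLp.toLp_zero, norm_zero] at h
  have : toLp 2 (a - b) = 0 := norm_le_zero_iff.1 (nonpos_of_mul_nonpos_right h hK)
  exact sub_eq_zero.1 (congrArg ofLp this)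

theorem toEuclideanLin_sub_smul_vecMulVec_self_apply (H : Matrix ι ι ℝ)
    (β : ℝ) (x v : EuclideanSpace ℝ ι) :
    toEuclideanLin (H - β • vecMulVec (ofLp x) (ofLp x)) v
      = toEuclideanLin H v - (β * ⟪x, v⟫) • x := by
  ext i
  simp [toLpLin_apply, vecMulVec_mulVec, EuclideanSpace.inner_eq_star_dotProduct,
    dotProduct_comm, mul_assoc]

variable {U : Matrix ι κ ℝ} {x : EuclideanSpace ℝ ι}

theorem toEuclideanLin_mul_transpose_apply_of_inner_eq_zero
    (hUx : U * Uᵀ = 1 - vecMulVec (ofLp x) (ofLp x)) {z : EuclideanSpace ℝ ι} (hz : ⟪x, z⟫ = 0) : toEuclideanLin U (toEuclideanLin Uᵀ z) = z := by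
  rw [← LinearMap.comp_apply, ← toLpLin_mul_same, hUx, ← one_smul ℝ (vecMulVec _ _),
    toEuclideanLin_sub_smul_vecMulVec_self_apply, hz, toLpLin_one]
  simp

theorem norm_toEuclideanLin_transpose_apply_of_inner_eq_zero
    (hUx : U * Uᵀ = 1 - vecMulVec (ofLp x) (ofLp x)) {z : EuclideanSpace ℝ ι} (hz : ⟪x, z⟫ = 0) : ‖toEuclideanLin Uᵀ z‖ = ‖z‖ := by
  have hadj : toEuclideanLin Uᵀ = (toEuclideanLin U).adjoint := by
    rw [← toEuclideanLin_conjTranspose_eq_adjoint, conjTranspose_eq_transpose_of_trivial]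
  rw [← sq_eq_sq₀ (norm_nonneg _) (norm_nonneg _), ← real_inner_self_eq_norm_sq,
    ← real_inner_self_eq_norm_sq, hadj, LinearMap.adjoint_inner_left, ← hadj,
    toEuclideanLin_mul_transpose_apply_of_inner_eq_zero hUx hz]

open Module.End in
theorem mul_norm_le_norm_toEuclideanLin_apply_of_inner_eq_zero {H : Matrix ι ι ℝ}
    (hH : H.IsHermitian) {α : ℝ} (hHx : toEuclideanLin H x = α • x)
    (hUx : U * Uᵀ = 1 - vecMulVec (ofLp x) (ofLp x)) {γ : ℝ} (hγ : 0 ≤ γ)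
    (hev : ∀ (μ : ℝ) (v : κ → ℝ), v ≠ 0 → (Uᵀ * H * U) *ᵥ v = μ • v → γ ≤ |μ|)
    {w : EuclideanSpace ℝ ι} (hw : ⟪x, w⟫ = 0) : γ * ‖w‖ ≤ ‖toEuclideanLin H w‖ := by
  have hHsymm : (toEuclideanLin H).IsSymmetric := isSymmetric_toEuclideanLin_iff.2 hH
  have hHw : ⟪x, toEuclideanLin H w⟫ = 0 := by
    rw [← hHsymm, hHx, real_inner_smul_left, hw, mul_zero]
  have hHp : (toEuclideanLin (Uᵀ * H * U)).IsSymmetric := by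
    rw [isSymmetric_toEuclideanLin_iff, ← conjTranspose_eq_transpose_of_trivial]
    exact isHermitian_conjTranspose_mul_mul U hH
  have hHp_ev : ∀ μ : ℝ, HasEigenvalue (toEuclideanLin (Uᵀ * H * U)) μ → γ ≤ |μ| := by
    intro μ hμ
    obtain ⟨v, hv⟩ := hμ.exists_hasEigenvector
    exact hev μ (ofLp v) (by simpa using hv.2) (congrArg ofLp hv.apply_eq_smul)
  calc γ * ‖w‖ = γ * ‖toEuclideanLin Uᵀ w‖ := by
        rw [norm_toEuclideanLin_transpose_apply_of_inner_eq_zero hUx hw]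
    _ ≤ ‖toEuclideanLin (Uᵀ * H * U) (toEuclideanLin Uᵀ w)‖ :=
        hHp.mul_norm_le_norm_apply hγ hHp_ev _
    _ = ‖toEuclideanLin H w‖ := by
        rw [toLpLin_mul_same, toLpLin_mul_same, LinearMap.comp_apply, LinearMap.comp_apply,
          toEuclideanLin_mul_transpose_apply_of_inner_eq_zero hUx hw,
          norm_toEuclideanLin_transpose_apply_of_inner_eq_zero hUx hHw]

end Matrix

theorem tmat_transpose {n m : ℕ} (hm : 2 ≤ m) {T : SymTensor n m} (hT : IsSymT T) (x : Evec n) :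
    (tmat T x)ᵀ = tmat T x := by
  ext i j
  rw [transpose_apply, tmat, of_apply, of_apply, ← hT (Equiv.swap ⟨0, by omega⟩ ⟨1, by omega⟩)]
  congr 1
  funext ⟨k, hk⟩
  rcases k with _ | _ | k <;> simp [Equiv.swap_apply_def, Fin.ext_iff]

theorem tmat_mulVec_self {n m : ℕ} (hm : 2 ≤ m) (T : SymTensor n m) (x : Evec n) :
    tmat T x *ᵥ ofLp x = ofLp (tvec T x) := by
  funext i
  set base : Fin m → Evec n := fun k => if (k : ℕ) = 0 then EuclideanSpace.single i 1 else x
  have hslot : ∀ y : Evec n, (fun k : Fin m => if (k : ℕ) = 0 then EuclideanSpace.single i 1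
      else if (k : ℕ) = 1 then y else x) = Function.update base ⟨1, by omega⟩ y := by
    intro y
    funext ⟨k, hk⟩
    rcases k with _ | _ | k <;> simp [base, Fin.ext_iff]
  calc (tmat T x *ᵥ ofLp x) i
      = ∑ j, T (Function.update base ⟨1, by omega⟩ (x j • EuclideanSpace.single j 1)) := by
        simp [mulVec, dotProduct, tmat, hslot, T.map_update_smul, mul_comm]
    _ = T (Function.update base ⟨1, by omega⟩ x) := by
        rw [← T.map_update_sum]
        congr
        simpa using (EuclideanSpace.basisFun (Fin n) ℝ).sum_repr x
    _ = ofLp (tvec T x) i := by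
        rw [Function.update_eq_self_iff.2 (by simp [base])]; rfl

theorem HmatL_isHermitian {n m : ℕ} (hm : 2 ≤ m) {T : SymTensor n m} (hT : IsSymT T)
    (x : Evec n) (lam : ℝ) : (HmatL T x lam).IsHermitian := by
  rw [IsHermitian, conjTranspose_eq_transpose_of_trivial, HmatL, transpose_sub, transpose_smul,
    transpose_smul, transpose_one, tmat_transpose hm hT]

theorem toEuclideanLin_HmatL_apply_self {n m : ℕ} (hm : 2 ≤ m) {T : SymTensor n m} {x : Evec n}
    {lam : ℝ} (hx : tvec T x = lam • x) :
    toEuclideanLin (HmatL T x lam) x = (((m : ℝ) - 2) * lam) • x := by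
  ext i
  simp [toLpLin_apply, HmatL, tmat_mulVec_self hm, hx]
  ring

theorem stmt_6_general {n m : ℕ} (hm : 2 ≤ m) (T : SymTensor n m) (hT : IsSymT T)
    (x : Evec n) (lam : ℝ) (h : IsEigenpair T x lam) (hlam : lam ≠ 0)
    (U : Matrix (Fin n) (Fin (n - 1)) ℝ)
    (hUx : U * Uᵀ = 1 - Matrix.vecMulVec (fun i => x i) (fun i => x i))
    (γ : ℝ) (hγ : 0 < γ)
    (hstable : ∀ (μ : ℝ) (v : Fin (n - 1) → ℝ), v ≠ 0 →
      (Uᵀ * HmatL T x lam * U).mulVec v = μ • v → γ ≤ |μ|) :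
    IsUnit (HmatL T x lam
        - ((m : ℝ) * lam) • Matrix.vecMulVec (fun i => x i) (fun i => x i)) ∧
    ∀ v : Evec n,
      min γ (2 * |lam|) * ‖v‖ ≤
        ‖toE ((HmatL T x lam
            - ((m : ℝ) * lam) • Matrix.vecMulVec (fun i => x i)
                (fun i => x i)).mulVec (fun i => v i))‖ := by
  have hH := HmatL_isHermitian hm hT x lam
  have hHx := toEuclideanLin_HmatL_apply_self hm h.1
  have hgap : |((m : ℝ) - 2) * lam - m * lam| = 2 * |lam| := by
    rw [show ((m : ℝ) - 2) * lam - m * lam = -2 * lam by ring, abs_mul, abs_neg, abs_two]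
  have hbound : ∀ v : Evec n, min γ (2 * |lam|) * ‖v‖ ≤
      ‖toEuclideanLin (HmatL T x lam - ((m : ℝ) * lam) • vecMulVec (ofLp x) (ofLp x)) v‖ := by
    intro v
    rw [toEuclideanLin_sub_smul_vecMulVec_self_apply, ← hgap]
    exact (isSymmetric_toEuclideanLin_iff.2 hH).mul_norm_le_norm_sub_smul_inner_smul h.2 hHx
      (fun w hw => mul_norm_le_norm_toEuclideanLin_apply_of_inner_eq_zero hH hHx hUx hγ.le
        hstable hw) _ v
  -- `toE (M *ᵥ fun i => v i)` is `toEuclideanLin M v` definitionally.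
  exact ⟨isUnit_of_mul_norm_le_norm_toEuclideanLin (by positivity) hbound, hbound⟩

/-- if every eigenvalue of the projected Hessian `H_p(x*) = Uᵀ H(x*) U`
has absolute value at least `γ > 0` and `λ* ≠ 0`, then
`A(x*) = H(x*) − m λ* x*(x*)ᵀ` is invertible with smallest singular value at least
`min {γ, 2|λ*|}`. -/
theorem stmt_6 {n m : ℕ} (hm : 2 ≤ m) (T : SymTensor n m) (hT : IsSymT T)
    (x : Evec n) (lam : ℝ) (h : IsEigenpair T x lam) (hlam : lam ≠ 0)
    (U : Matrix (Fin n) (Fin (n - 1)) ℝ) (hU : Uᵀ * U = 1)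
    (hUx : U * Uᵀ = 1 - Matrix.vecMulVec (fun i => x i) (fun i => x i))
    (γ : ℝ) (hγ : 0 < γ)
    (hstable : ∀ (μ : ℝ) (v : Fin (n - 1) → ℝ), v ≠ 0 →
      (Uᵀ * HmatL T x lam * U).mulVec v = μ • v → γ ≤ |μ|) :
    IsUnit (HmatL T x lam
        - ((m : ℝ) * lam) • Matrix.vecMulVec (fun i => x i) (fun i => x i)) ∧
    ∀ v : Evec n,
      min γ (2 * |lam|) * ‖v‖ ≤
        ‖toE ((HmatL T x lam
            - ((m : ℝ) * lam) • Matrix.vecMulVec (fun i => x i)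
                (fun i => x i)).mulVec (fun i => v i))‖ :=
  stmt_6_general hm T hT x lam h hlam U hUx γ hγ hstable
end
end

section
/- Let x, x* ∈ ℝ^n be unit vectors, α = x^T x*, u* = α x* − x, and let u ∈ ℝ^n satisfy ‖u* − u‖ ≤ 1/4. If α ≥ 1/2, then ‖x* − (x+u)/‖x+u‖‖ ≤ 2‖u* − u‖/(α − ‖u* − u‖) ≤ 8‖u* − u‖. -/
open scoped RealInnerProductSpace

/-- let `x, x*` be unit vectors, `α = xᵀx*`, `u* = α x* − x`, and let `u`
satisfy `‖u* − u‖ ≤ 1/4`. If `α ≥ 1/2`, then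
`‖x* − (x+u)/‖x+u‖‖ ≤ 2‖u* − u‖/(α − ‖u* − u‖) ≤ 8‖u* − u‖`. -/
theorem stmt_9 {n : ℕ} (x xs u : EuclideanSpace ℝ (Fin n))
    (hx : ‖x‖ = 1) (hxs : ‖xs‖ = 1)
    (hu : ‖(⟪x, xs⟫ • xs - x) - u‖ ≤ 1 / 4) (hα : 1 / 2 ≤ ⟪x, xs⟫) :
    ‖xs - ‖x + u‖⁻¹ • (x + u)‖ ≤
      2 * ‖(⟪x, xs⟫ • xs - x) - u‖ / (⟪x, xs⟫ - ‖(⟪x, xs⟫ • xs - x) - u‖) ∧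
    2 * ‖(⟪x, xs⟫ • xs - x) - u‖ / (⟪x, xs⟫ - ‖(⟪x, xs⟫ • xs - x) - u‖) ≤
      8 * ‖(⟪x, xs⟫ • xs - x) - u‖ := by
  set α := ⟪x, xs⟫ with hαdef
  set e := (α • xs - x) - u with he
  set ε := ‖e‖ with hεdef
  have hv : x + u = α • xs - e := by rw [he]; abel
  have hαxs : ‖α • xs‖ = α := by
    rw [norm_smul, hxs, mul_one, Real.norm_eq_abs, abs_of_pos]; linarith
  have hεnn : 0 ≤ ε := norm_nonneg _
  have hαε : (1:ℝ)/4 ≤ α - ε := by linarith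
  have hvnorm : α - ε ≤ ‖x + u‖ := by
    have h := norm_sub_norm_le (α • xs) e
    rw [hαxs] at h; rw [hv]; linarith
  have hvpos : 0 < ‖x + u‖ := lt_of_lt_of_le (by linarith) hvnorm
  have hdiff : |‖x + u‖ - α| ≤ ε := by
    have h := abs_norm_sub_norm_le (x + u) (α • xs)
    rw [hαxs] at h
    calc |‖x + u‖ - α| ≤ ‖(x + u) - α • xs‖ := h
      _ = ε := by rw [hv]; simp [hεdef]
  have hnum : ‖‖x + u‖ • xs - (x + u)‖ ≤ 2 * ε := by
    have h2 : ‖x + u‖ • xs - (x + u) = (‖x + u‖ - α) • xs + e := by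
      rw [hv, sub_smul]; abel
    rw [h2]
    calc ‖(‖x + u‖ - α) • xs + e‖ ≤ ‖(‖x + u‖ - α) • xs‖ + ‖e‖ := norm_add_le _ _
      _ = |‖x + u‖ - α| + ε := by rw [norm_smul, hxs, mul_one, Real.norm_eq_abs]
      _ ≤ 2 * ε := by linarith [abs_le.mp (le_refl |‖x + u‖ - α|)]
  have key : ‖xs - ‖x + u‖⁻¹ • (x + u)‖ ≤ 2 * ε / ‖x + u‖ := by
    have h3 : xs - ‖x + u‖⁻¹ • (x + u) = ‖x + u‖⁻¹ • (‖x + u‖ • xs - (x + u)) := by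
      rw [smul_sub, smul_smul, inv_mul_cancel₀ hvpos.ne', one_smul]
    rw [h3, norm_smul, norm_inv, norm_norm, div_eq_inv_mul]
    exact mul_le_mul_of_nonneg_left hnum (by positivity)
  constructor
  · calc ‖xs - ‖x + u‖⁻¹ • (x + u)‖ ≤ 2 * ε / ‖x + u‖ := key
      _ ≤ 2 * ε / (α - ε) := by gcongr
  · rw [div_le_iff₀ (by linarith : (0:ℝ) < α - ε)]
    nlinarith
end

section
/- Let x be a unit vector, x* a unit eigenvector of the symmetric tensor T of order m with eigenvalue λ*, α = x^T x*, u* = α x* − x, and β* = α^{m−2} λ* − μ(x). Then the first-order (in u*) term vanishes: T(x*, ..., x*, u*) = 0, and |β*| ≤ |λ*|·‖u*‖² + Σ_{j=2}^m C(m,j) |T(x*,...,x*, u*,...,u*)| where u* appears j times; in particular there exists a constant C depending only on T and m such that |β*| ≤ C ‖u*‖² whenever ‖u*‖ ≤ 1. -/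
/-! Write `x = α x* - u*` with `u* ⊥ x*`. By symmetry of `T` the multinomial expansion of
`μ(x) = T(α x* - u*, …)` collapses to the binomial sum
`Σ_j C(m,j) α^(m-j) (-1)^j T(x*,…,x*,u*,…,u*)`. Its `j = 0` term is `α^m λ*`, and its `j = 1`
term is `λ* ⟪x*, u*⟫ = 0` by the eigen-equation. Since `α² = 1 - ‖u*‖²`, what remains of `β*` is
`α^(m-2) λ* ‖u*‖²` together with the terms `j ≥ 2`, each `O(‖u*‖^j)` because a multilinear form
on a finite-dimensional space is bounded. -/

open scoped RealInnerProductSpace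
open Finset Matrix

noncomputable section

/-- `T (tailFill j x u)` is the paper's `T(x,…,x,u,…,u)` with `u` in the last `j` slots. -/
def tailFill {M : Type*} {m : ℕ} (j : ℕ) (v w : M) : Fin m → M :=
  fun k => if (k : ℕ) < m - j then v else w

theorem card_filter_not_lt_sub {m j : ℕ} (hj : j ≤ m) :
    #{k : Fin m | ¬(k : ℕ) < m - j} = j := by
  have := card_filter_add_card_filter_not (s := (univ : Finset (Fin m))) (fun k => (k : ℕ) < m - j)
  rw [Fin.card_filter_val_lt, card_univ, Fintype.card_fin] at this
  omega

theorem prod_tailFill {α : Type*} [CommMonoid α] {m j : ℕ} (hj : j ≤ m) (a b : α) :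
    ∏ k : Fin m, tailFill j a b k = a ^ (m - j) * b ^ j := by
  simp only [tailFill, prod_ite, prod_const, Fin.card_filter_val_lt, card_filter_not_lt_sub hj]
  rw [min_eq_right (Nat.sub_le m j)]

theorem prod_norm_tailFill {E : Type*} [Norm E] {m j : ℕ} (hj : j ≤ m) (v w : E) :
    ∏ k : Fin m, ‖tailFill j v w k‖ = ‖v‖ ^ (m - j) * ‖w‖ ^ j := by
  rw [← prod_tailFill hj]
  exact prod_congr rfl fun k _ => apply_ite _ _ _ _

section Symmetric

variable {R M N : Type*} [CommSemiring R] [AddCommMonoid M] [Module R M] [AddCommMonoid N]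
  [Module R N] {m : ℕ} (f : MultilinearMap R (fun _ : Fin m => M) N)

theorem MultilinearMap.map_tailFill_smul {j : ℕ} (hj : j ≤ m) (a b : R) (v w : M) :
    f (tailFill j (a • v) (b • w)) = (a ^ (m - j) * b ^ j) • f (tailFill j v w) := by
  have : tailFill j (a • v) (b • w) = fun k : Fin m => tailFill j a b k • tailFill j v w k := by
    funext k; unfold tailFill; split_ifs <;> rfl
  rw [this, f.map_smul_univ, prod_tailFill hj]

variable {f}

theorem MultilinearMap.map_ite_mem_eq_tailFill
    (hf : ∀ (σ : Equiv.Perm (Fin m)) (v : Fin m → M), f (fun i => v (σ i)) = f v)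
    (s : Finset (Fin m)) (v w : M) :
    f (fun i => if i ∈ s then w else v) = f (tailFill #s v w) := by
  have hcard : #s = #{k : Fin m | ¬(k : ℕ) < m - #s} :=
    (card_filter_not_lt_sub (card_le_univ s |>.trans_eq (Fintype.card_fin m))).symm
  let e := equivOfCardEq hcard
  rw [← hf e.extendSubtype (tailFill #s v w)]
  congr 1
  funext i
  by_cases hi : i ∈ s
  · have := (mem_filter.1 (e.extendSubtype_mem i hi)).2
    rw [if_pos hi]
    exact (if_neg this).symm
  · have := e.extendSubtype_not_mem i hi
    rw [mem_filter, not_and, not_not] at this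
    rw [if_neg hi]
    exact (if_pos (this (mem_univ _))).symm

theorem MultilinearMap.map_add_const_eq_sum
    (hf : ∀ (σ : Equiv.Perm (Fin m)) (v : Fin m → M), f (fun i => v (σ i)) = f v) (v w : M) :
    f (fun _ => v + w) = ∑ j ∈ Finset.range (m + 1), m.choose j • f (tailFill j v w) := by
  calc f (fun _ => v + w) = ∑ s : Finset (Fin m), f (tailFill #s v w) := by
        rw [add_comm v w]
        exact (f.map_add_univ _ _).trans (sum_congr rfl fun s _ => map_ite_mem_eq_tailFill hf s v w)
    _ = _ := by
        rw [← powerset_univ, sum_powerset_apply_card (fun j => f (tailFill j v w)), card_univ,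
          Fintype.card_fin]

end Symmetric

section SymmetricRing

variable {R M N : Type*} [CommRing R] [AddCommGroup M] [Module R M] [AddCommGroup N] [Module R N]
  {m : ℕ} {f : MultilinearMap R (fun _ : Fin m => M) N}

theorem MultilinearMap.map_smul_sub_const_eq_sum
    (hf : ∀ (σ : Equiv.Perm (Fin m)) (v : Fin m → M), f (fun i => v (σ i)) = f v) (a : R) (v w : M) :
    f (fun _ => a • v - w) = ∑ j ∈ Finset.range (m + 1),
      ((m.choose j : R) * (a ^ (m - j) * (-1) ^ j)) • f (tailFill j v w) := by
  rw [show a • v - w = a • v + (-1 : R) • w by rw [neg_one_smul, sub_eq_add_neg],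
    map_add_const_eq_sum hf]
  refine sum_congr rfl fun j hj => ?_
  rw [f.map_tailFill_smul (Nat.lt_succ_iff.1 (mem_range.1 hj)), ← Nat.cast_smul_eq_nsmul R]
  simp only [mul_smul]

end SymmetricRing

theorem MultilinearMap.continuous_of_finiteDimensional {𝕜 ι E F : Type*}
    [NontriviallyNormedField 𝕜] [CompleteSpace 𝕜] [Fintype ι] [DecidableEq ι]
    [NormedAddCommGroup E] [NormedSpace 𝕜 E] [FiniteDimensional 𝕜 E]
    [NormedAddCommGroup F] [NormedSpace 𝕜 F] (f : MultilinearMap 𝕜 (fun _ : ι => E) F) :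
    Continuous f := by
  let b := Module.finBasis 𝕜 E
  have hf : ⇑f = fun v => ∑ r : ι → Fin (Module.finrank 𝕜 E),
      (∏ k, b.coord (r k) (v k)) • f fun k => b (r k) := by
    funext v
    conv_lhs => rw [show v = fun k => ∑ i, b.repr (v k) i • b i from
      funext fun k => (b.sum_repr (v k)).symm]
    rw [f.map_sum]
    exact sum_congr rfl fun r _ => f.map_smul_univ _ _
  rw [hf]
  refine continuous_finsetSum _ fun r _ => (continuous_finsetProd _ fun k _ => ?_).smul
    continuous_const
  exact (b.coord (r k)).continuous_of_finiteDimensional.comp (continuous_apply k)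

theorem inner_smul_self_sub {E : Type*} [NormedAddCommGroup E] [InnerProductSpace ℝ E] {e : E}
    (he : ‖e‖ = 1) (x : E) : ⟪e, ⟪x, e⟫ • e - x⟫ = 0 := by
  rw [inner_sub_right, real_inner_smul_right, real_inner_self_eq_norm_sq, he, real_inner_comm]
  ring

theorem norm_smul_self_sub_sq {E : Type*} [NormedAddCommGroup E] [InnerProductSpace ℝ E] {e : E}
    (he : ‖e‖ = 1) (x : E) : ‖⟪x, e⟫ • e - x‖ ^ 2 = ‖x‖ ^ 2 - ⟪x, e⟫ ^ 2 := by
  rw [norm_sub_sq_real, norm_smul, real_inner_smul_left, he, Real.norm_eq_abs, real_inner_comm]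
  ring_nf
  rw [sq_abs]
  ring

theorem apply_first_slot_eq_inner_tvec {n m : ℕ} (hm : 0 < m) (T : SymTensor n m) (xs u : Evec n) :
    (T fun k => if (k : ℕ) = 0 then u else xs) = ⟪tvec T xs, u⟫ := by
  let L := T.toLinearMap (fun _ => xs) ⟨0, hm⟩
  have hL : ∀ v, L v = T fun k => if (k : ℕ) = 0 then v else xs := by
    intro v
    simp only [L, MultilinearMap.toLinearMap_apply]
    congr 1
    funext k
    simp [Function.update_apply, Fin.ext_iff]
  have : L = innerₛₗ ℝ (tvec T xs) := by
    refine (EuclideanSpace.basisFun (Fin n) ℝ).toBasis.ext fun i => ?_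
    rw [OrthonormalBasis.coe_toBasis, EuclideanSpace.basisFun_apply, innerₛₗ_apply_apply,
      EuclideanSpace.inner_single_right, hL]
    simp [tvec, toE]
  rw [← hL, this, innerₛₗ_apply_apply]

section Eigenpair

variable {n m : ℕ} {T : SymTensor n m} {xs : Evec n} {lam : ℝ}

theorem IsEigenpair.tmu_eq (hm : 0 < m) (h : IsEigenpair T xs lam) : tmu T xs = lam := by
  have := apply_first_slot_eq_inner_tvec hm T xs xs
  simp only [ite_self] at this
  rw [tmu, this, h.1, real_inner_smul_left, real_inner_self_eq_norm_sq, h.2, one_pow, mul_one]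

theorem IsEigenpair.apply_tailFill_one (hm : 0 < m) (hT : IsSymT T) (h : IsEigenpair T xs lam)
    (u : Evec n) : T (tailFill 1 xs u) = lam * ⟪xs, u⟫ := by
  have hslot := T.map_ite_mem_eq_tailFill hT {⟨0, hm⟩} xs u
  rw [card_singleton] at hslot
  rw [← hslot, ← real_inner_smul_left, ← h.1, ← apply_first_slot_eq_inner_tvec hm]
  congr 1
  funext k
  simp [Fin.ext_iff]

theorem IsEigenpair.tmu_eq_sum (hm : 2 ≤ m) (hT : IsSymT T) (h : IsEigenpair T xs lam)
    (x : Evec n) : tmu T x = ⟪x, xs⟫ ^ m * lam + ∑ j ∈ Icc 2 m,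
      (m.choose j * (⟪x, xs⟫ ^ (m - j) * (-1) ^ j)) * T (tailFill j xs (⟪x, xs⟫ • xs - x)) := by
  have hx : x = ⟪x, xs⟫ • xs - (⟪x, xs⟫ • xs - x) := (sub_sub_cancel _ _).symm
  have h0 : tailFill 0 xs (⟪x, xs⟫ • xs - x) = fun _ : Fin m => xs := by
    funext k; simp [tailFill]
  conv_lhs => rw [tmu, hx]
  rw [T.map_smul_sub_const_eq_sum hT, range_eq_Ico, sum_eq_sum_Ico_succ_bot (by omega),
    sum_eq_sum_Ico_succ_bot (by omega), Ico_add_one_right_eq_Icc, h0, ← tmu, h.tmu_eq (by omega),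
    h.apply_tailFill_one (by omega) hT, inner_smul_self_sub h.2]
  simp

theorem IsEigenpair.abs_pow_mul_sub_tmu_le (hm : 2 ≤ m) (hT : IsSymT T)
    (h : IsEigenpair T xs lam) {x : Evec n} (hx : ‖x‖ = 1) :
    |⟪x, xs⟫ ^ (m - 2) * lam - tmu T x| ≤ |lam| * ‖⟪x, xs⟫ • xs - x‖ ^ 2 +
      ∑ j ∈ Icc 2 m, (m.choose j : ℝ) * |T (tailFill j xs (⟪x, xs⟫ • xs - x))| := by
  set a := ⟪x, xs⟫
  set u := a • xs - x
  have hu : ‖u‖ ^ 2 = 1 - a ^ 2 := by rw [norm_smul_self_sub_sq h.2, hx, one_pow]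
  have ha : |a| ≤ 1 := sq_le_one_iff_abs_le_one a |>.1 (by nlinarith)
  obtain ⟨k, rfl⟩ : ∃ k, m = k + 2 := ⟨m - 2, by omega⟩
  have hβ : a ^ (k + 2 - 2) * lam - tmu T x = a ^ k * lam * ‖u‖ ^ 2 - ∑ j ∈ Icc 2 (k + 2),
      ((k + 2).choose j * (a ^ (k + 2 - j) * (-1) ^ j)) * T (tailFill j xs u) := by
    rw [h.tmu_eq_sum hm hT, hu, Nat.add_sub_cancel]
    ring
  rw [hβ]
  refine (abs_sub _ _).trans (add_le_add ?_ ((abs_sum_le_sum_abs _ _).trans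
    (sum_le_sum fun j _ => ?_)))
  · calc |a ^ k * lam * ‖u‖ ^ 2| = |a| ^ k * (|lam| * ‖u‖ ^ 2) := by
          rw [abs_mul, abs_mul, abs_pow, abs_of_nonneg (sq_nonneg ‖u‖)]; ring
      _ ≤ |lam| * ‖u‖ ^ 2 := mul_le_of_le_one_left (by positivity) (pow_le_one₀ (abs_nonneg a) ha)
  · rw [abs_mul, abs_mul, Nat.abs_cast, abs_mul, abs_pow, abs_pow, abs_neg, abs_one, one_pow,
      mul_one]
    gcongr
    exact mul_le_of_le_one_right (Nat.cast_nonneg _) (pow_le_one₀ (abs_nonneg a) ha)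

end Eigenpair

/-- with `x` a unit vector, `(x*, λ*)` a unit eigenpair of `T`,
`α = xᵀ x*`, `u* = α x* − x` and `β* = α^{m−2} λ* − μ(x)`: the first-order term
vanishes, `T(x*,…,x*,u*) = 0`; moreover
`|β*| ≤ |λ*| ‖u*‖² + Σ_{j=2}^m C(m,j) |T(x*,…,x*,u*,…,u*)|` (with `u*` in `j`
slots), and there is a constant `C` depending only on `T` and `m` such that
`|β*| ≤ C ‖u*‖²` whenever `‖u*‖ ≤ 1`. -/
theorem stmt_19 {n m : ℕ} (hm : 2 ≤ m) (T : SymTensor n m) (hT : IsSymT T)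
    (lam : ℝ) (xs : Evec n) (heig : IsEigenpair T xs lam) :
    (∀ x : Evec n, ‖x‖ = 1 →
      (T fun k => if (k : ℕ) < m - 1 then xs else ⟪x, xs⟫ • xs - x) = 0 ∧
      |⟪x, xs⟫ ^ (m - 2) * lam - tmu T x| ≤
        |lam| * ‖⟪x, xs⟫ • xs - x‖ ^ 2 +
          ∑ j ∈ Finset.Icc 2 m, (m.choose j : ℝ) *
            |T fun k => if (k : ℕ) < m - j then xs else ⟪x, xs⟫ • xs - x|) ∧
    ∃ C : ℝ, ∀ x : Evec n, ‖x‖ = 1 → ‖⟪x, xs⟫ • xs - x‖ ≤ 1 →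
      |⟪x, xs⟫ ^ (m - 2) * lam - tmu T x| ≤ C * ‖⟪x, xs⟫ • xs - x‖ ^ 2 := by
  have hestimate (x : Evec n) (hx : ‖x‖ = 1) := heig.abs_pow_mul_sub_tmu_le hm hT hx
  refine ⟨fun x hx => ⟨?_, hestimate x hx⟩, ?_⟩
  · change T (tailFill 1 xs _) = 0
    rw [heig.apply_tailFill_one (by omega) hT, inner_smul_self_sub heig.2, mul_zero]
  obtain ⟨B, hB0, hB⟩ := T.exists_bound_of_continuous T.continuous_of_finiteDimensional
  refine ⟨|lam| + (∑ j ∈ Icc 2 m, (m.choose j : ℝ)) * B, fun x hx hu => ?_⟩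
  set u := ⟪x, xs⟫ • xs - x
  calc _ ≤ _ := hestimate x hx
    _ ≤ |lam| * ‖u‖ ^ 2 + ∑ j ∈ Icc 2 m, (m.choose j : ℝ) * (B * ‖u‖ ^ 2) := by
        gcongr with j hj
        obtain ⟨h2j, hjm⟩ := mem_Icc.1 hj
        calc |T (tailFill j xs u)| ≤ B * ∏ k, ‖tailFill j xs u k‖ := hB _
          _ = B * ‖u‖ ^ j := by rw [prod_norm_tailFill hjm, heig.2, one_pow, one_mul]
          _ ≤ B * ‖u‖ ^ 2 :=
            mul_le_mul_of_nonneg_left (pow_le_pow_of_le_one (norm_nonneg _) hu h2j) hB0.le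
    _ = _ := by rw [← sum_mul]; ring
end
end
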